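/- arXiv:2601.18964 — 2 statements merged into one kernel-verified Lean document; each statement's English description precedes it below -/
import Mathlib

section
/- Let A be an n×n real symmetric matrix, θ ∈ ℝ an eigenvalue of A whose eigenspace has dimension m, and let E be the orthogonal spectral projection of A for θ. If either 2m > n, or 2m = n and E_{u,u} < 1/2 for some index u, then there exists an index v with E_{v,v} > 1/2, and hence |exp(itA)_{v,v}| ≥ 2·E_{v,v} − 1 > 0 for all real t; in particular the graph has a sedentary vertex. -/
open Matrix
open scoped Kronecker

/-- Transition matrix `U(t) = exp(itA)` of the continuous-time quantum walk on the
weighted graph with real symmetric adjacency matrix `A`. -/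
noncomputable def transition {m : Type*} [Fintype m] [DecidableEq m]
    (A : Matrix m m ℝ) (t : ℝ) : Matrix m m ℂ :=
  NormedSpace.exp ((Complex.I * t) • A.map (fun x : ℝ => (x : ℂ)))

/-- A vertex `u` is sedentary if `inf_{t>0} |U(t)_{u,u}| > 0`. -/
noncomputable def Sedentary {m : Type*} [Fintype m] [DecidableEq m]
    (A : Matrix m m ℝ) (u : m) : Prop :=
  0 < ⨅ t : {t : ℝ // 0 < t}, ‖transition A t u u‖

/-- `E` is the orthogonal spectral projection of `A` for the eigenvalue `θ`:
`E` is real symmetric, idempotent, and for every vector `v`, `A·v = θ·v ↔ E·v = v`. -/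
def IsSpectralProj {m : Type*} [Fintype m] [DecidableEq m]
    (A : Matrix m m ℝ) (θ : ℝ) (E : Matrix m m ℝ) : Prop :=
  E.IsSymm ∧ E * E = E ∧ ∀ v : m → ℝ, A.mulVec v = θ • v ↔ E.mulVec v = v

/-! The trace of `E` is the multiplicity `m` of `θ`, so under either hypothesis some diagonal
entry `E v v` exceeds `1/2`. As `E` commutes with `A`, the unitary `U(t) = exp(itA)` satisfies
`U(t) E = e^{itθ} E`, whence `U(t) = e^{itθ} E + U(t) (1 - E)`. The diagonal entry of
`U(t) (1 - E)` at `v` is bounded by `(1 - E) v v` via Cauchy–Schwarz, which gives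
`‖U(t) v v‖ ≥ E v v - (1 - E v v)`. -/

open NormedSpace in
theorem NormedSpace.exp_mul_of_mul_eq_smul {𝕂 𝔸 : Type*} [RCLike 𝕂] [NormedRing 𝔸]
    [NormedAlgebra 𝕂 𝔸] [CompleteSpace 𝔸] {a p : 𝔸} {c : 𝕂} (h : a * p = c • p) :
    exp a * p = exp c • p := by
  have hpow (k : ℕ) : a ^ k * p = c ^ k • p := by
    induction k with
    | zero => simp
    | succ k ih => rw [pow_succ', mul_assoc, ih, mul_smul_comm, h, smul_smul, ← pow_succ]
  have hterm : (fun k : ℕ => ((k.factorial⁻¹ : 𝕂) • a ^ k) * p) =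
      fun k => ((k.factorial⁻¹ : 𝕂) • c ^ k) • p := by
    funext k
    rw [smul_mul_assoc, hpow, smul_smul, smul_eq_mul]
  refine ((exp_series_hasSum_exp' (𝕂 := 𝕂) a).mul_right p).unique ?_
  rw [hterm]
  exact (exp_series_hasSum_exp' (𝕂 := 𝕂) c).smul_const p

namespace Matrix

/- `NormedSpace.exp_mem_unitary_of_mem_skewAdjoint` needs a norm on the algebra, and matrices
carry none globally. -/
open NormedSpace in
theorem exp_mem_unitary_of_mem_skewAdjoint {k 𝔸 : Type*} [Fintype k] [DecidableEq k]
    [NormedRing 𝔸] [NormedAlgebra ℚ 𝔸] [CompleteSpace 𝔸] [StarRing 𝔸] [ContinuousStar 𝔸]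
    {M : Matrix k k 𝔸} (h : M ∈ skewAdjoint _) : exp M ∈ unitary (Matrix k k 𝔸) := by
  rw [Unitary.mem_iff, star_exp, skewAdjoint.mem_iff.mp h,
    ← exp_add_of_commute _ _ (Commute.refl M).neg_left,
    ← exp_add_of_commute _ _ (Commute.refl M).neg_right,
    neg_add_cancel, add_neg_cancel, exp_zero, and_self_iff]

section CauchySchwarz

variable {l m n : Type*} [Fintype m]

theorem re_mul_conjTranspose_apply_self (M : Matrix l m ℂ) (i : l) :
    ((M * Mᴴ) i i).re = ∑ j, ‖M i j‖ ^ 2 := by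
  simp [mul_apply, Complex.mul_conj', ← Complex.ofReal_pow]

theorem re_conjTranspose_mul_apply_self (N : Matrix m n ℂ) (j : n) :
    ((Nᴴ * N) j j).re = ∑ i, ‖N i j‖ ^ 2 := by
  simp [mul_apply, Complex.conj_mul', ← Complex.ofReal_pow]

theorem norm_mul_apply_sq_le (M : Matrix l m ℂ) (N : Matrix m n ℂ) (i : l) (j : n) :
    ‖(M * N) i j‖ ^ 2 ≤ ((M * Mᴴ) i i).re * ((Nᴴ * N) j j).re := by
  rw [re_mul_conjTranspose_apply_self, re_conjTranspose_mul_apply_self]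
  calc ‖(M * N) i j‖ ^ 2 ≤ (∑ k, ‖M i k‖ * ‖N k j‖) ^ 2 := by
        gcongr
        rw [mul_apply]
        exact (norm_sum_le _ _).trans_eq (by simp_rw [norm_mul])
    _ ≤ _ := Finset.sum_mul_sq_le_sq_mul_sq _ _ _

end CauchySchwarz

variable {k : Type*} [Fintype k] [DecidableEq k] {U P : Matrix k k ℂ}

/- `(U * P) i i = (U * P * P) i i` pairs a row of `U * P` with a column of `P`, and both have
squared length `P i i`. -/
theorem IsStarProjection.norm_mul_apply_self_le (hU : U ∈ unitary (Matrix k k ℂ))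
    (hP : IsStarProjection P) (hUP : Commute U P) (i : k) : ‖(U * P) i i‖ ≤ (P i i).re := by
  have hPh : Pᴴ = P := hP.isSelfAdjoint
  have hPP : Pᴴ * P = P := by rw [hPh, hP.isIdempotentElem.eq]
  have hUPP : U * P * P = U * P := by rw [mul_assoc, hP.isIdempotentElem.eq]
  have hUPUP : U * P * (U * P)ᴴ = P := calc
    U * P * (U * P)ᴴ = U * P * P * Uᴴ := by simp only [conjTranspose_mul, hPh, mul_assoc]
    _ = P * (U * star U) := by rw [hUPP, hUP.eq, mul_assoc, star_eq_conjTranspose]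
    _ = P := by rw [Unitary.mul_star_self_of_mem hU, mul_one]
  have hsq := norm_mul_apply_sq_le (U * P) P i i
  rw [hUPP, hUPUP, hPP, ← sq] at hsq
  have hnonneg : 0 ≤ (P i i).re := by
    rw [← hPP, re_conjTranspose_mul_apply_self]; positivity
  exact (pow_le_pow_iff_left₀ (norm_nonneg _) hnonneg two_ne_zero).mp hsq

theorem IsStarProjection.two_mul_re_apply_self_sub_one_le (hU : U ∈ unitary (Matrix k k ℂ))
    (hP : IsStarProjection P) (hUP : Commute U P) {z : ℂ} (hz : ‖z‖ = 1) (hUPz : U * P = z • P)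
    (i : k) : 2 * (P i i).re - 1 ≤ ‖U i i‖ := by
  have hsplit : U i i = z * P i i + (U * (1 - P)) i i := by
    rw [mul_sub, mul_one, hUPz]; simp
  have hcompl := hP.one_sub.norm_mul_apply_self_le hU ((Commute.one_right U).sub_right hUP) i
  have hnorm : (P i i).re ≤ ‖z * P i i‖ := by
    rw [norm_mul, hz, one_mul]; exact Complex.re_le_norm _
  calc 2 * (P i i).re - 1 ≤ ‖z * P i i‖ - ‖(U * (1 - P)) i i‖ := by
        simp only [sub_apply, one_apply_eq, Complex.sub_re, Complex.one_re] at hcompl; linarith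
    _ ≤ ‖U i i‖ := hsplit ▸ norm_sub_le_norm_add _ _

end Matrix

namespace IsSpectralProj

variable {ι : Type*} [Fintype ι] [DecidableEq ι] {A E : Matrix ι ι ℝ} {θ : ℝ}

theorem mulVec_mulVec_self (hE : IsSpectralProj A θ E) (v : ι → ℝ) :
    E *ᵥ (E *ᵥ v) = E *ᵥ v := by
  rw [mulVec_mulVec, hE.2.1]

theorem range_mulVecLin (hE : IsSpectralProj A θ E) :
    LinearMap.range E.mulVecLin = Module.End.eigenspace A.mulVecLin θ := by
  ext v
  rw [Module.End.mem_eigenspace_iff, mulVecLin_apply, hE.2.2]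
  exact ⟨fun ⟨w, hw⟩ => hw ▸ hE.mulVec_mulVec_self w, fun hv => ⟨v, hv⟩⟩

theorem trace_eq_finrank (hE : IsSpectralProj A θ E) :
    E.trace = Module.finrank ℝ (Module.End.eigenspace A.mulVecLin θ) := by
  have hproj : LinearMap.IsProj (LinearMap.range E.mulVecLin) E.mulVecLin :=
    ⟨LinearMap.mem_range_self _, fun _ ⟨w, hw⟩ => hw ▸ hE.mulVec_mulVec_self w⟩
  rw [← hE.range_mulVecLin, ← hproj.trace, ← Matrix.trace_toLin'_eq, Matrix.toLin'_apply']

theorem mul_eq_smul (hE : IsSpectralProj A θ E) : A * E = θ • E := by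
  rw [ext_iff_mulVec]
  intro v
  rw [← mulVec_mulVec, smul_mulVec, (hE.2.2 _).2 (hE.mulVec_mulVec_self v)]

theorem commute (hA : A.IsSymm) (hE : IsSpectralProj A θ E) : Commute A E := by
  have h := congrArg transpose hE.mul_eq_smul
  rw [transpose_mul, transpose_smul, hA.eq, hE.1.eq, ← hE.mul_eq_smul] at h
  exact h.symm

theorem isStarProjection_map (hE : IsSpectralProj A θ E) :
    IsStarProjection (E.map ((↑) : ℝ → ℂ)) where
  isIdempotentElem := calc
    E.map (↑) * E.map (↑) = (E * E).map ((↑) : ℝ → ℂ) :=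
      (Matrix.map_mul (f := Complex.ofRealHom)).symm
    _ = E.map (↑) := by rw [hE.2.1]
  isSelfAdjoint := by
    ext i j
    simp [hE.1.apply i j]

end IsSpectralProj

theorem exists_half_lt_of_sum_eq {ι : Type*} [Fintype ι] {f : ι → ℝ} {m : ℕ}
    (hsum : ∑ i, f i = m)
    (hcase : Fintype.card ι < 2 * m ∨ (2 * m = Fintype.card ι ∧ ∃ u, f u < 1 / 2)) :
    ∃ v, 1 / 2 < f v := by
  by_contra! hle
  have hcard : ∑ _i : ι, (1 / 2 : ℝ) = Fintype.card ι / 2 := by simp [div_eq_mul_inv]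
  rcases hcase with hlt | ⟨heq, u, hu⟩
  · have hle_sum := Finset.sum_le_sum fun i (_ : i ∈ Finset.univ) => hle i
    rw [hsum, hcard] at hle_sum
    have : (Fintype.card ι : ℝ) < 2 * m := by exact_mod_cast hlt
    linarith
  · have hlt_sum := Finset.sum_lt_sum (fun i (_ : i ∈ Finset.univ) => hle i)
      ⟨u, Finset.mem_univ u, hu⟩
    rw [hsum, hcard] at hlt_sum
    have : (2 * m : ℝ) = Fintype.card ι := by exact_mod_cast heq
    linarith

section Transition

variable {ι : Type*} [Fintype ι] [DecidableEq ι] {A E : Matrix ι ι ℝ}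

theorem transition_mem_unitary (hA : A.IsSymm) (t : ℝ) :
    transition A t ∈ unitary (Matrix ι ι ℂ) := by
  refine Matrix.exp_mem_unitary_of_mem_skewAdjoint (skewAdjoint.mem_iff.mpr ?_)
  ext i j
  simp [hA.apply i j]

theorem commute_transition_map (hAE : Commute A E) (t : ℝ) :
    Commute (transition A t) (E.map ((↑) : ℝ → ℂ)) :=
  ((hAE.map Complex.ofRealHom.mapMatrix).smul_left _).exp_left

open scoped Matrix.Norms.Operator in
theorem transition_mul_map_of_mul_eq_smul {θ : ℝ} (h : A * E = θ • E) (t : ℝ) :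
    transition A t * E.map ((↑) : ℝ → ℂ) =
      Complex.exp (Complex.I * t * θ) • E.map ((↑) : ℝ → ℂ) := by
  rw [Complex.exp_eq_exp_ℂ]
  refine NormedSpace.exp_mul_of_mul_eq_smul ?_
  have hmap : (A * E).map ((↑) : ℝ → ℂ) = A.map (↑) * E.map (↑) :=
    Matrix.map_mul (f := Complex.ofRealHom)
  rw [smul_mul_assoc, ← hmap, h]
  ext i j
  simp [mul_assoc]

theorem IsSpectralProj.two_mul_apply_self_sub_one_le_norm_transition {θ : ℝ} (hA : A.IsSymm)
    (hE : IsSpectralProj A θ E) (t : ℝ) (v : ι) : 2 * E v v - 1 ≤ ‖transition A t v v‖ := by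
  have hz : ‖Complex.exp (Complex.I * t * θ)‖ = 1 := by
    rw [show Complex.I * t * θ = ((t * θ : ℝ) : ℂ) * Complex.I by push_cast; ring]
    exact Complex.norm_exp_ofReal_mul_I _
  simpa using hE.isStarProjection_map.two_mul_re_apply_self_sub_one_le
    (transition_mem_unitary hA t) (commute_transition_map (hE.commute hA) t) hz
    (transition_mul_map_of_mul_eq_smul hE.mul_eq_smul t) v

theorem sedentary_of_le_norm_transition {u : ι} {c : ℝ} (hc : 0 < c)
    (h : ∀ t, c ≤ ‖transition A t u u‖) : Sedentary A u :=
  hc.trans_le (le_ciInf fun t => h t)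

end Transition

theorem stmt1_general {n : ℕ} (A : Matrix (Fin n) (Fin n) ℝ) (hA : A.IsSymm)
    (θ : ℝ) (m : ℕ)
    (hdim : Module.finrank ℝ (Module.End.eigenspace A.mulVecLin θ) = m)
    (E : Matrix (Fin n) (Fin n) ℝ) (hE : IsSpectralProj A θ E)
    (hcase : 2 * m > n ∨ (2 * m = n ∧ ∃ u : Fin n, E u u < 1 / 2)) :
    ∃ v : Fin n, 1 / 2 < E v v ∧ 0 < 2 * E v v - 1 ∧
      (∀ t : ℝ, 2 * E v v - 1 ≤ ‖transition A t v v‖) ∧ Sedentary A v := by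
  obtain ⟨v, hv⟩ := exists_half_lt_of_sum_eq (f := fun i => E i i) (m := m)
    (by rw [← hdim]; exact hE.trace_eq_finrank) (by simpa using hcase)
  have hbound (t : ℝ) := hE.two_mul_apply_self_sub_one_le_norm_transition hA t v
  exact ⟨v, hv, by linarith, hbound, sedentary_of_le_norm_transition (by linarith) hbound⟩

/-- if `θ` is an eigenvalue of the real symmetric matrix `A` whose eigenspace
has dimension `m` and either `2m > n`, or `2m = n` and `E_{u,u} < 1/2` for some `u`, then
some vertex `v` has `E_{v,v} > 1/2`, hence `|exp(itA)_{v,v}| ≥ 2E_{v,v} - 1 > 0` for all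
real `t`; in particular the graph has a sedentary vertex. -/
theorem stmt1 {n : ℕ} (A : Matrix (Fin n) (Fin n) ℝ) (hA : A.IsSymm)
    (θ : ℝ) (m : ℕ) (heig : Module.End.HasEigenvalue A.mulVecLin θ)
    (hdim : Module.finrank ℝ (Module.End.eigenspace A.mulVecLin θ) = m)
    (E : Matrix (Fin n) (Fin n) ℝ) (hE : IsSpectralProj A θ E)
    (hcase : 2 * m > n ∨ (2 * m = n ∧ ∃ u : Fin n, E u u < 1 / 2)) :
    ∃ v : Fin n, 1 / 2 < E v v ∧ 0 < 2 * E v v - 1 ∧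
      (∀ t : ℝ, 2 * E v v - 1 ≤ ‖transition A t v v‖) ∧ Sedentary A v :=
  stmt1_general A hA θ m hdim E hE hcase
end

section
/- Let A be an n×n real symmetric matrix that is bipartite (there is a ±1 diagonal matrix S with S·A·S = −A), and let u be an index such that 0 is not in the eigenvalue support of u, i.e., every vector w with A·w = 0 satisfies w_u = 0. Then u is not sedentary: inf_{t>0} |exp(itA)_{u,u}| = 0; equivalently, for every ε > 0 there exists t > 0 with |exp(itA)_{u,u}| < ε. -/
/-!
Write `U(t) = exp(itA)`. Bipartiteness gives `S U(t) S = U(-t) = U(t)ᴴ`, so `U(t)_{uu}` is real;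
it is continuous in `t` and equals `1` at `t = 0`. Since `0` is not in the eigenvalue support of
`u`, the vector `e_u` is `A v` for some real `v`, hence `U(t)_{uu} = -i (d/dt) (U(t) v)_u`, and
unitarity of `U(t)` bounds `∫₀ᵀ U(t)_{uu} dt` uniformly in `T`. A continuous real function that
never gets within `ε` of `0` at positive times keeps the sign of its value at `0` (intermediate
value theorem), so its integrals would grow linearly; hence `|U(t)_{uu}|` gets arbitrarily small.
-/

open Matrix
open scoped Kronecker

section Range

variable {K m n : Type*} [Field K] [Fintype m] [Fintype n] [DecidableEq m]

theorem Matrix.exists_mulVec_eq_of_forall_vecMul_eq_zero {A : Matrix m n K} {e : m → K}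
    (h : ∀ w, w ᵥ* A = 0 → w ⬝ᵥ e = 0) : ∃ v, A *ᵥ v = e := by
  by_contra he
  obtain ⟨f, hfe, hf⟩ := Submodule.exists_dual_map_eq_bot_of_notMem
    (p := LinearMap.range A.mulVecLin) (x := e) (by simpa using he) inferInstance
  set w := (dotProductEquiv K m).symm f
  have hf_eq (x : m → K) : f x = w ⬝ᵥ x := by
    rw [← dotProductEquiv_apply_apply, LinearEquiv.apply_symm_apply]
  have hwA : w ᵥ* A = 0 := dotProduct_eq_zero _ fun x => by
    rw [← dotProduct_mulVec, ← hf_eq]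
    exact (Submodule.eq_bot_iff _).1 hf _ (Submodule.mem_map_of_mem ⟨x, rfl⟩)
  exact hfe (by rw [hf_eq, h w hwA])

theorem Matrix.IsSymm.exists_mulVec_eq_single {A : Matrix m m K} (hA : A.IsSymm) {u : m}
    (hker : ∀ w, A *ᵥ w = 0 → w u = 0) : ∃ v, A *ᵥ v = Pi.single u 1 := by
  refine exists_mulVec_eq_of_forall_vecMul_eq_zero fun w hw => ?_
  rw [← mulVec_transpose, hA.eq] at hw
  simpa using hker w hw

end Range

theorem Matrix.map_ofReal_mul {l m n : Type*} [Fintype m] (X : Matrix l m ℝ)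
    (Y : Matrix m n ℝ) :
    (X * Y).map Complex.ofReal = X.map Complex.ofReal * Y.map Complex.ofReal :=
  Matrix.map_mul (f := Complex.ofRealHom)

section Transition

variable {m : Type*} [Fintype m] [DecidableEq m]

theorem transition_eq_exp_smul (A : Matrix m m ℝ) (t : ℝ) :
    transition A t = NormedSpace.exp ((t : ℂ) • (Complex.I • A.map Complex.ofReal)) := by
  rw [transition, smul_smul, mul_comm]

theorem transition_zero (A : Matrix m m ℝ) : transition A 0 = 1 := by
  simp [transition]

theorem transition_add (A : Matrix m m ℝ) (s t : ℝ) :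
    transition A (s + t) = transition A s * transition A t := by
  simp only [transition_eq_exp_smul, Complex.ofReal_add, add_smul]
  exact Matrix.exp_add_of_commute _ _ ((Commute.refl _).smul_left _ |>.smul_right _)

theorem transition_neg_left (A : Matrix m m ℝ) (t : ℝ) :
    transition (-A) t = transition A (-t) := by
  simp [transition, Matrix.map_neg]

theorem conjTranspose_transition {A : Matrix m m ℝ} (hA : A.IsSymm) (t : ℝ) :
    (transition A t)ᴴ = transition A (-t) := by
  rw [transition, ← Matrix.exp_conjTranspose, conjTranspose_smul,
    ← conjTranspose_map _ fun x => by simp, conjTranspose_eq_transpose_of_trivial, hA.eq]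
  simp [transition]

theorem transition_mem_unitaryGroup {A : Matrix m m ℝ} (hA : A.IsSymm) (t : ℝ) :
    transition A t ∈ unitaryGroup m ℂ := by
  rw [mem_unitaryGroup_iff, star_eq_conjTranspose, conjTranspose_transition hA, ← transition_add,
    add_neg_cancel, transition_zero]

theorem norm_transition_apply_le_one {A : Matrix m m ℝ} (hA : A.IsSymm) (t : ℝ) (i j : m) :
    ‖transition A t i j‖ ≤ 1 :=
  entry_norm_bound_of_unitary (transition_mem_unitaryGroup hA t) i j

theorem transition_conj {S : Matrix m m ℝ} (hS : S * S = 1) (A : Matrix m m ℝ) (t : ℝ) :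
    transition (S * A * S) t =
      S.map Complex.ofReal * transition A t * S.map Complex.ofReal := by
  have hSc : S.map Complex.ofReal * S.map Complex.ofReal = 1 := by
    rw [← map_ofReal_mul, hS]
    simp
  have key := Matrix.exp_conj _ ((Complex.I * t) • A.map Complex.ofReal) ⟨⟨_, _, hSc, hSc⟩, rfl⟩
  rw [inv_eq_left_inv hSc, Matrix.mul_smul, Matrix.smul_mul] at key
  rw [transition, map_ofReal_mul, map_ofReal_mul, key, transition]

open scoped Matrix.Norms.Operator in
theorem hasDerivAt_transition_mulVec_apply (A : Matrix m m ℝ) (w : m → ℂ) (i : m) (t : ℝ) :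
    HasDerivAt (fun s => (transition A s *ᵥ w) i)
      (((transition A t * (Complex.I • A.map Complex.ofReal)) *ᵥ w) i) t := by
  let L : Matrix m m ℂ →L[ℂ] ℂ := LinearMap.toContinuousLinearMap
    (LinearMap.proj i ∘ₗ (mulVecBilin ℂ ℂ).flip w)
  have h := (L.hasFDerivAt.comp_hasDerivAt (t : ℂ)
    (hasDerivAt_exp_smul_const (Complex.I • A.map Complex.ofReal) (t : ℂ))).comp_ofReal
  -- the `rfl`s identify the exponentials for the operator-norm and the product topologies
  convert h using 1
  · funext s
    rw [transition_eq_exp_smul]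
    rfl
  · rw [transition_eq_exp_smul]
    rfl

open scoped Matrix.Norms.Operator in
theorem continuous_transition_apply (A : Matrix m m ℝ) (i j : m) :
    Continuous fun t => transition A t i j := by
  have : Continuous fun t : ℝ => NormedSpace.exp ((Complex.I * t) • A.map Complex.ofReal) :=
    NormedSpace.exp_continuous.comp (by fun_prop)
  exact (continuous_apply j).comp ((continuous_apply i).comp this)

theorem norm_transition_mulVec_apply_le {A : Matrix m m ℝ} (hA : A.IsSymm) (t : ℝ) (w : m → ℂ)
    (i : m) : ‖(transition A t *ᵥ w) i‖ ≤ ∑ j, ‖w j‖ :=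
  calc ‖∑ j, transition A t i j * w j‖
      _ ≤ ∑ j, ‖transition A t i j‖ * ‖w j‖ := norm_sum_le_of_le _ fun _ _ => (norm_mul _ _).le
      _ ≤ ∑ j, ‖w j‖ := Finset.sum_le_sum fun j _ =>
          mul_le_of_le_one_left (norm_nonneg _) (norm_transition_apply_le_one hA t i j)

theorem conj_transition_apply_self {A : Matrix m m ℝ} (hA : A.IsSymm) {d : m → ℝ}
    (hd : ∀ i, d i * d i = 1) (hbip : diagonal d * A * diagonal d = -A) (t : ℝ) (u : m) :
    starRingEnd ℂ (transition A t u u) = transition A t u u := by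
  have hS : diagonal d * diagonal d = 1 := by
    rw [diagonal_mul_diagonal, funext hd, diagonal_one]
  have hconj := transition_conj hS A t
  rw [hbip, transition_neg_left, diagonal_map Complex.ofReal_zero] at hconj
  calc starRingEnd ℂ (transition A t u u)
      _ = (transition A t)ᴴ u u := (conjTranspose_apply _ _ _).symm
      _ = (d u : ℂ) * transition A t u u * d u := by
          rw [conjTranspose_transition hA, hconj, mul_diagonal, diagonal_mul]
      _ = transition A t u u := by
          rw [mul_right_comm, ← Complex.ofReal_mul, hd, Complex.ofReal_one, one_mul]

theorem norm_integral_transition_apply_self_le {A : Matrix m m ℝ} (hA : A.IsSymm) {u : m}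
    {v : m → ℝ} (hv : A *ᵥ v = Pi.single u 1) (T : ℝ) :
    ‖∫ t in 0..T, transition A t u u‖ ≤ 2 * ∑ j, |v j| := by
  set w : m → ℂ := fun j => v j
  set H : ℝ → ℂ := fun s => (transition A s *ᵥ w) u
  have hAw : A.map Complex.ofReal *ᵥ w = Pi.single u 1 := by
    ext i
    have h := RingHom.map_mulVec Complex.ofRealHom A v i
    rw [hv] at h
    exact h.symm.trans (by rcases eq_or_ne i u with rfl | hi <;> simp [*])
  have hH (t : ℝ) : HasDerivAt H (Complex.I * transition A t u u) t := by
    convert hasDerivAt_transition_mulVec_apply A w u t using 1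
    rw [← mulVec_mulVec, smul_mulVec, hAw, mulVec_smul, mulVec_single_one]
    rfl
  have hftc : ∫ t in 0..T, Complex.I * transition A t u u = H T - H 0 :=
    intervalIntegral.integral_eq_sub_of_hasDerivAt (fun t _ => hH t)
      ((continuous_const.mul (continuous_transition_apply A u u)).intervalIntegrable 0 T)
  have hH_le (s : ℝ) : ‖H s‖ ≤ ∑ j, |v j| := by
    simpa [w] using norm_transition_mulVec_apply_le hA s w u
  calc ‖∫ t in 0..T, transition A t u u‖
      _ = ‖H T - H 0‖ := by
          rw [← hftc, intervalIntegral.integral_const_mul, norm_mul, Complex.norm_I, one_mul]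
      _ ≤ ‖H T‖ + ‖H 0‖ := norm_sub_le _ _
      _ ≤ 2 * ∑ j, |v j| := by linarith [hH_le T, hH_le 0]

end Transition

theorem exists_pos_abs_lt_of_integral_le {r : ℝ → ℝ} (hr : Continuous r) (h0 : 0 < r 0) {C : ℝ}
    (hC : ∀ T, 0 < T → ∫ t in 0..T, r t ≤ C) {ε : ℝ} (hε : 0 < ε) :
    ∃ t, 0 < t ∧ |r t| < ε := by
  by_contra! h
  have hpos (t : ℝ) (ht : 0 < t) : ε ≤ r t := by
    refine (le_abs'.1 (h t ht)).resolve_left fun hneg => ?_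
    obtain ⟨s, hs, hrs⟩ := intermediate_value_Icc' ht.le hr.continuousOn
      ⟨hneg.trans (neg_nonpos.2 hε.le), h0.le⟩
    have hs0 : 0 < s := hs.1.lt_of_ne (by rintro rfl; exact h0.ne' hrs)
    linarith [h s hs0, abs_eq_zero.2 hrs]
  set T := (|C| + 1) / ε
  have hT : 0 < T := by positivity
  have hle : ε * T ≤ ∫ t in 0..T, r t := by
    simpa [mul_comm] using intervalIntegral.integral_mono_on_of_le_Ioo hT.le
      (intervalIntegrable_const (μ := MeasureTheory.volume)) (hr.intervalIntegrable 0 T)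
      fun t ht => hpos t ht.1
  have hεT : ε * T = |C| + 1 := mul_div_cancel₀ _ hε.ne'
  linarith [hC T hT, le_abs_self C]

theorem Real.iInf_eq_zero_of_forall_exists_lt {ι : Sort*} {f : ι → ℝ} (h0 : ∀ i, 0 ≤ f i)
    (h : ∀ ε, 0 < ε → ∃ i, f i < ε) : ⨅ i, f i = 0 := by
  have hbdd : BddBelow (Set.range f) := ⟨0, by rintro _ ⟨i, rfl⟩; exact h0 i⟩
  refine le_antisymm (le_of_forall_pos_lt_add fun ε hε => ?_) (Real.iInf_nonneg h0)
  obtain ⟨i, hi⟩ := h ε hε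
  exact (ciInf_le hbdd i).trans_lt (by simpa using hi)

/-- for a bipartite real symmetric matrix `A`, if `0` is not in the eigenvalue
support of `u` (every null vector of `A` vanishes at `u`), then `u` is not sedentary:
`inf_{t>0} |exp(itA)_{u,u}| = 0`; equivalently for every `ε > 0` there is `t > 0` with
`|exp(itA)_{u,u}| < ε`. -/
theorem stmt5 {n : ℕ} (A : Matrix (Fin n) (Fin n) ℝ) (hA : A.IsSymm)
    (d : Fin n → ℝ) (hd : ∀ i, d i = 1 ∨ d i = -1)
    (S : Matrix (Fin n) (Fin n) ℝ) (hS : S = Matrix.diagonal d)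
    (hbip : S * A * S = -A)
    (u : Fin n) (hker : ∀ w : Fin n → ℝ, A.mulVec w = 0 → w u = 0) :
    (⨅ t : {t : ℝ // 0 < t}, ‖transition A t u u‖) = 0 ∧
    ∀ ε : ℝ, 0 < ε → ∃ t : ℝ, 0 < t ∧ ‖transition A t u u‖ < ε := by
  subst hS
  obtain ⟨v, hv⟩ := Matrix.IsSymm.exists_mulVec_eq_single hA hker
  have hd2 (i : Fin n) : d i * d i = 1 := by rcases hd i with h | h <;> simp [h]
  have hreal (t : ℝ) : ((transition A t u u).re : ℂ) = transition A t u u :=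
    Complex.conj_eq_iff_re.1 (conj_transition_apply_self hA hd2 hbip t u)
  have hcont := continuous_transition_apply A u u
  have hint (T : ℝ) : ∫ t in 0..T, (transition A t u u).re ≤ 2 * ∑ j, |v j| := by
    have hre : ∫ t in 0..T, (transition A t u u).re = (∫ t in 0..T, transition A t u u).re := by
      simpa using Complex.reCLM.intervalIntegral_comp_comm (hcont.intervalIntegrable 0 T)
    exact hre ▸ (Complex.re_le_norm _).trans (norm_integral_transition_apply_self_le hA hv T)
  have hsmall (ε : ℝ) (hε : 0 < ε) : ∃ t : ℝ, 0 < t ∧ ‖transition A t u u‖ < ε := by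
    obtain ⟨t, ht, hlt⟩ := exists_pos_abs_lt_of_integral_le (Complex.continuous_re.comp hcont)
      (by simp [transition_zero]) (fun T _ => hint T) hε
    exact ⟨t, ht, by rwa [← hreal, Complex.norm_real, Real.norm_eq_abs]⟩
  exact ⟨Real.iInf_eq_zero_of_forall_exists_lt (fun _ => norm_nonneg _)
    fun ε hε => let ⟨t, ht, hlt⟩ := hsmall ε hε; ⟨⟨t, ht⟩, hlt⟩, hsmall⟩
end
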